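/- For every integer k ≥ 0 and l ≥ 0 with k + 2l + 2 ≥ N + 1, the function ∂ₓ^{2l+2}(⟨x⟩^{−k}) lies in W^m_N(ℝ) for every m ≥ 1; consequently ⟨x⟩^{−k} = Λ(∑_{j=0}^l ∂ₓ^{2j}(⟨x⟩^{−k})) + ∂ₓ^{2l+2}(⟨x⟩^{−k}), expressing ⟨x⟩^{−k} as Λ of an explicit function plus a remainder in W^m_N, where Λ = 1 − ∂ₓ². -/

import Mathlib

/-!
With `c = -k/2` we have `⟨x⟩^{-k} = (1 + x²)^c`. By induction, the `n`-th derivative of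
`(1 + x²)^c` is `p(x) (1 + x²)^{c-n}` with `deg p ≤ n`, hence `O(⟨x⟩^{2c-n})`. So
`⟨x⟩^{N+j} ∂^{2l+2+j} ⟨x⟩^{-k} = O(⟨x⟩^{N-k-2l-2}) = O(⟨x⟩^{-1})`, which is square
integrable, and smoothness supplies the weak derivatives via the fundamental theorem of calculus.
The identity holds for every smooth `f`: with `S = ∑_{j ≤ l} f^{(2j)}`, the sum `S - S''`
telescopes to `f - f^{(2l+2)}`.
-/

open MeasureTheory Filter

/-- The Japanese bracket `⟨x⟩ = √(1+x²)`. -/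
noncomputable def jp (x : ℝ) : ℝ := Real.sqrt (1 + x ^ 2)

/-- `D` is a family of iterated weak derivatives up to order `n`. -/
def HasWeakDerivs (D : ℕ → ℝ → ℝ) (n : ℕ) : Prop :=
  (∀ j, j ≤ n → LocallyIntegrable (D j) volume) ∧
  ∀ j, j < n → ∀ x : ℝ, D j x = D j 0 + ∫ t in (0:ℝ)..x, D (j + 1) t

/-- Membership in `W^m_N(ℝ)` for the family `D` of iterated weak derivatives. -/
def MemWN (m N : ℕ) (D : ℕ → ℝ → ℝ) : Prop :=
  HasWeakDerivs D m ∧ ∀ j, j ≤ m → MemLp (fun x => jp x ^ (N + j) * D j x) 2 volume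

open Polynomial
open scoped ContDiff

section IteratedDeriv

variable {𝕜 : Type*} [NontriviallyNormedField 𝕜] {F : Type*} [NormedAddCommGroup F]
  [NormedSpace 𝕜 F] {f : 𝕜 → F}

theorem iteratedDeriv_iteratedDeriv (m n : ℕ) :
    iteratedDeriv m (iteratedDeriv n f) = iteratedDeriv (m + n) f := by
  simp only [iteratedDeriv_eq_iterate, Function.iterate_add_apply]

theorem ContDiff.contDiff_iteratedDeriv (hf : ContDiff 𝕜 ∞ f) (n : ℕ) :
    ContDiff 𝕜 ∞ (iteratedDeriv n f) :=
  iteratedDeriv_eq_iterate (f := f) ▸ hf.iterate_deriv n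

theorem ContDiff.hasDerivAt_iteratedDeriv (hf : ContDiff 𝕜 ∞ f) (n : ℕ) (x : 𝕜) :
    HasDerivAt (iteratedDeriv n f) (iteratedDeriv (n + 1) f x) x := by
  rw [iteratedDeriv_succ]
  exact ((hf.contDiff_iteratedDeriv n).differentiable (by simp) x).hasDerivAt

theorem ContDiff.eq_sum_sub_iteratedDeriv_two_add (hf : ContDiff 𝕜 ∞ f) (l : ℕ) (x : 𝕜) :
    f x = ((∑ j ∈ Finset.range (l + 1), iteratedDeriv (2 * j) f x) -
      iteratedDeriv 2 (fun y => ∑ j ∈ Finset.range (l + 1), iteratedDeriv (2 * j) f y) x) +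
      iteratedDeriv (2 * l + 2) f x := by
  have htel := Finset.sum_range_sub' (fun j => iteratedDeriv (2 * j) f x) (l + 1)
  simp only [Finset.sum_sub_distrib, mul_zero, mul_add_one, iteratedDeriv_zero] at htel
  rw [iteratedDeriv_fun_sum fun j _ =>
    ((hf.contDiff_iteratedDeriv _).of_le ENat.LEInfty.out).contDiffAt]
  simp only [iteratedDeriv_iteratedDeriv, add_comm 2, htel]
  abel

end IteratedDeriv

theorem ContDiff.hasWeakDerivs_iteratedDeriv {f : ℝ → ℝ} (hf : ContDiff ℝ ∞ f)
    (a n : ℕ) :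
    HasWeakDerivs (fun j => iteratedDeriv (a + j) f) n := by
  refine ⟨fun j _ => (hf.contDiff_iteratedDeriv _).continuous.locallyIntegrable,
    fun j _ x => ?_⟩
  show iteratedDeriv (a + j) f x =
    iteratedDeriv (a + j) f 0 + ∫ t in (0 : ℝ)..x, iteratedDeriv (a + j + 1) f t
  rw [intervalIntegral.integral_eq_sub_of_hasDerivAt
    (fun t _ => hf.hasDerivAt_iteratedDeriv (a + j) t)
    ((hf.contDiff_iteratedDeriv _).continuous.intervalIntegrable 0 x)]
  abel

theorem Polynomial.natDegree_derivative_mul_X_sq_add_one_add_le {R : Type*} [Semiring R]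
    [Nontrivial R] {p : R[X]} {n : ℕ} (hp : p.natDegree ≤ n) (b : R) :
    (derivative p * (X ^ 2 + C 1) + C b * X * p).natDegree ≤ n + 1 := by
  refine natDegree_add_le_of_degree_le ?_ ?_
  · rcases eq_or_ne p.natDegree 0 with h0 | h0
    · simp [derivative_of_natDegree_zero h0]
    · refine (natDegree_mul_le_of_le (natDegree_derivative_le p)
        natDegree_X_pow_add_C.le).trans ?_
      omega
  · refine (natDegree_mul_le_of_le ((natDegree_C_mul_le b X).trans natDegree_X_le) hp).trans ?_
    omega

theorem contDiff_one_add_sq_rpow (c : ℝ) : ContDiff ℝ ∞ fun x : ℝ => (1 + x ^ 2) ^ c :=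
  ContDiff.rpow_const_of_ne (by fun_prop) fun x => by positivity

theorem hasDerivAt_eval_mul_one_add_sq_rpow (p : ℝ[X]) (a x : ℝ) :
    HasDerivAt (fun t => p.eval t * (1 + t ^ 2) ^ a)
      ((derivative p * (X ^ 2 + C 1) + C (2 * a) * X * p).eval x * (1 + x ^ 2) ^ (a - 1)) x := by
  have hx : 0 < 1 + x ^ 2 := by positivity
  refine ((p.hasDerivAt x).mul
    (((hasDerivAt_pow 2 x).const_add 1).rpow_const (Or.inl hx.ne'))).congr_deriv ?_
  rw [show (1 + x ^ 2) ^ a = (1 + x ^ 2) ^ (a - 1) * (1 + x ^ 2) by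
    rw [← Real.rpow_add_one hx.ne', sub_add_cancel]]
  simp only [eval_add, eval_mul, eval_pow, eval_C, eval_X]
  ring

theorem exists_iteratedDeriv_one_add_sq_rpow_eq (c : ℝ) (n : ℕ) :
    ∃ p : ℝ[X], p.natDegree ≤ n ∧
      iteratedDeriv n (fun t : ℝ => (1 + t ^ 2) ^ c) =
        fun x => p.eval x * (1 + x ^ 2) ^ (c - n) := by
  induction n with
  | zero => exact ⟨1, by simp, by simp⟩
  | succ n ih =>
    obtain ⟨p, hp, hderiv⟩ := ih
    refine ⟨_, natDegree_derivative_mul_X_sq_add_one_add_le hp (2 * (c - n)),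
      funext fun x => ?_⟩
    rw [iteratedDeriv_succ, hderiv, (hasDerivAt_eval_mul_one_add_sq_rpow p (c - n) x).deriv]
    push_cast
    ring_nf

theorem abs_le_jp (x : ℝ) : |x| ≤ jp x := Real.abs_le_sqrt (by linarith)

theorem one_le_jp (x : ℝ) : 1 ≤ jp x := Real.one_le_sqrt.mpr (by nlinarith)

theorem jp_rpow (s x : ℝ) : jp x ^ s = (1 + x ^ 2) ^ (s / 2) := by
  rw [jp, Real.sqrt_eq_rpow, ← Real.rpow_mul (by positivity)]
  ring_nf

theorem jp_pow (n : ℕ) (x : ℝ) : jp x ^ n = (1 + x ^ 2) ^ ((n : ℝ) / 2) := by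
  rw [← Real.rpow_natCast, jp_rpow]

theorem Polynomial.exists_abs_eval_le_mul_jp_pow {p : ℝ[X]} {n : ℕ} (hp : p.natDegree ≤ n) :
    ∃ C, ∀ x, |p.eval x| ≤ C * jp x ^ n := by
  refine ⟨∑ i ∈ Finset.range (n + 1), |p.coeff i|, fun x => ?_⟩
  rw [eval_eq_sum_range' (Nat.lt_succ_of_le hp), Finset.sum_mul]
  refine (Finset.abs_sum_le_sum_abs _ _).trans (Finset.sum_le_sum fun i hi => ?_)
  rw [abs_mul, abs_pow]
  gcongr
  calc |x| ^ i ≤ jp x ^ i := by gcongr; exact abs_le_jp x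
    _ ≤ jp x ^ n :=
        pow_le_pow_right₀ (one_le_jp x) (Nat.lt_succ_iff.mp (Finset.mem_range.mp hi))

theorem exists_abs_iteratedDeriv_one_add_sq_rpow_le (c : ℝ) (n : ℕ) :
    ∃ C, ∀ x, |iteratedDeriv n (fun t : ℝ => (1 + t ^ 2) ^ c) x| ≤
      C * (1 + x ^ 2) ^ (c - n / 2) := by
  obtain ⟨p, hp, hderiv⟩ := exists_iteratedDeriv_one_add_sq_rpow_eq c n
  obtain ⟨C, hC⟩ := exists_abs_eval_le_mul_jp_pow hp
  refine ⟨C, fun x => ?_⟩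
  have hx : 0 < 1 + x ^ 2 := by positivity
  calc |iteratedDeriv n (fun t : ℝ => (1 + t ^ 2) ^ c) x|
      = |p.eval x| * (1 + x ^ 2) ^ (c - n) := by
        rw [hderiv, abs_mul, abs_of_pos (Real.rpow_pos_of_pos hx _)]
    _ ≤ C * jp x ^ n * (1 + x ^ 2) ^ (c - n) := by gcongr; exact hC x
    _ = C * (1 + x ^ 2) ^ (c - n / 2) := by
        rw [jp_pow, mul_assoc, ← Real.rpow_add hx]
        ring_nf

theorem memLp_two_of_abs_le_mul_one_add_sq_rpow {g : ℝ → ℝ} (hg : AEStronglyMeasurable g)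
    {a C : ℝ} (ha : a < -1 / 4) (hgC : ∀ x, |g x| ≤ C * (1 + x ^ 2) ^ a) : MemLp g 2 := by
  have hmaj : MemLp (fun x : ℝ => (1 + x ^ 2) ^ a) 2 := by
    rw [memLp_two_iff_integrable_sq
      (contDiff_one_add_sq_rpow a).continuous.aestronglyMeasurable]
    refine (integrable_rpow_neg_one_add_norm_sq (E := ℝ) (μ := volume) (r := -4 * a)
      (by simp; linarith)).congr (Eventually.of_forall fun x => ?_)
    dsimp only
    rw [Real.norm_eq_abs, sq_abs, ← Real.rpow_mul_natCast (by positivity)]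
    ring_nf
  refine (hmaj.const_mul C).of_le hg (Eventually.of_forall fun x => ?_)
  simpa [Real.norm_eq_abs] using (hgC x).trans (le_abs_self _)

theorem memLp_one_add_sq_rpow_mul_iteratedDeriv {c w : ℝ} {n : ℕ}
    (h : w + c - n / 2 < -1 / 4) :
    MemLp (fun x => (1 + x ^ 2) ^ w * iteratedDeriv n (fun t : ℝ => (1 + t ^ 2) ^ c) x) 2 := by
  obtain ⟨C, hC⟩ := exists_abs_iteratedDeriv_one_add_sq_rpow_le c n
  refine memLp_two_of_abs_le_mul_one_add_sq_rpow (C := C) ?_ h fun x => ?_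
  · exact ((contDiff_one_add_sq_rpow w).continuous.mul
      ((contDiff_one_add_sq_rpow c).contDiff_iteratedDeriv n).continuous).aestronglyMeasurable
  have hx : 0 < 1 + x ^ 2 := by positivity
  calc |(1 + x ^ 2) ^ w * iteratedDeriv n (fun t : ℝ => (1 + t ^ 2) ^ c) x|
      = (1 + x ^ 2) ^ w * |iteratedDeriv n (fun t : ℝ => (1 + t ^ 2) ^ c) x| := by
        rw [abs_mul, abs_of_pos (Real.rpow_pos_of_pos hx w)]
    _ ≤ (1 + x ^ 2) ^ w * (C * (1 + x ^ 2) ^ (c - n / 2)) := by gcongr; exact hC x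
    _ = C * (1 + x ^ 2) ^ (w + c - n / 2) := by
        rw [add_sub_assoc, Real.rpow_add hx]
        ring

theorem stmt19_general (k l N m : ℕ) (h : N + 1 ≤ k + 2 * l + 2) :
    MemWN m N (fun j => iteratedDeriv (2 * l + 2 + j) (fun y : ℝ => jp y ^ (-(k : ℝ)))) ∧
    ∀ x : ℝ,
      jp x ^ (-(k : ℝ)) =
        ((fun y : ℝ => ∑ j ∈ Finset.range (l + 1),
            iteratedDeriv (2 * j) (fun z : ℝ => jp z ^ (-(k : ℝ))) y) x -
          iteratedDeriv 2 (fun y : ℝ => ∑ j ∈ Finset.range (l + 1),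
            iteratedDeriv (2 * j) (fun z : ℝ => jp z ^ (-(k : ℝ))) y) x) +
        iteratedDeriv (2 * l + 2) (fun y : ℝ => jp y ^ (-(k : ℝ))) x := by
  have hsmooth := contDiff_one_add_sq_rpow (-(k : ℝ) / 2)
  have hjp : (fun y : ℝ => jp y ^ (-(k : ℝ))) = fun y => (1 + y ^ 2) ^ (-(k : ℝ) / 2) :=
    funext fun y => jp_rpow _ y
  rw [hjp]
  refine ⟨⟨hsmooth.hasWeakDerivs_iteratedDeriv _ _, fun j _ => ?_⟩, fun x => ?_⟩
  · simp only [jp_pow]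
    apply memLp_one_add_sq_rpow_mul_iteratedDeriv
    have : (N : ℝ) + 1 ≤ k + 2 * l + 2 := by exact_mod_cast h
    push_cast
    linarith
  · rw [jp_rpow]
    exact hsmooth.eq_sum_sub_iteratedDeriv_two_add l x

/-- For `k + 2l + 2 ≥ N + 1`, the function `∂ₓ^{2l+2}(⟨x⟩^{-k})` lies in `W^m_N(ℝ)` for every
`m ≥ 1`, and the telescoping identity
`⟨x⟩^{-k} = Λ(∑_{j=0}^l ∂ₓ^{2j}⟨x⟩^{-k}) + ∂ₓ^{2l+2}⟨x⟩^{-k}` holds, where `Λ = 1 - ∂ₓ²`. -/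
theorem stmt19 (k l N m : ℕ) (hm : 1 ≤ m) (h : N + 1 ≤ k + 2 * l + 2) :
    MemWN m N (fun j => iteratedDeriv (2 * l + 2 + j) (fun y : ℝ => jp y ^ (-(k : ℝ)))) ∧
    ∀ x : ℝ,
      jp x ^ (-(k : ℝ)) =
        ((fun y : ℝ => ∑ j ∈ Finset.range (l + 1),
            iteratedDeriv (2 * j) (fun z : ℝ => jp z ^ (-(k : ℝ))) y) x -
          iteratedDeriv 2 (fun y : ℝ => ∑ j ∈ Finset.range (l + 1),
            iteratedDeriv (2 * j) (fun z : ℝ => jp z ^ (-(k : ℝ))) y) x) +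
        iteratedDeriv (2 * l + 2) (fun y : ℝ => jp y ^ (-(k : ℝ))) x :=
  stmt19_general k l N m h
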